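/- arXiv:1401.7545 — 5 statements merged into one kernel-verified Lean document; each statement's English description precedes it below -/
import Mathlib

section
/- Viète's formula: define a sequence of real numbers by a₀ = √(1/2) and a_{n+1} = √((1 + aₙ)/2). Then the partial products ∏_{k=0}^{n} aₖ converge to 2/π as n → ∞. Equivalently, π = 2 / (√(1/2) · √(1/2 + (1/2)√(1/2)) · √(1/2 + (1/2)√(1/2 + (1/2)√(1/2))) · · ·). -/
open Filter Topology

/-!
Writing `aₙ = cos (π / 2 ^ (n + 2))` (half-angle formula), the duplication formula
`sinc x = cos (x / 2) * sinc (x / 2)` telescopes to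
`∏_{k ≤ n} aₖ = sinc (π / 2) / sinc (π / 2 ^ (n + 2))`, and `sinc` is continuous with
`sinc 0 = 1`, while `sinc (π / 2) = 2 / π`.
-/

namespace Real

lemma sinc_eq_cos_half_mul_sinc_half (x : ℝ) : sinc x = cos (x / 2) * sinc (x / 2) := by
  rcases eq_or_ne x 0 with rfl | hx
  · simp
  have hx2 : x / 2 ≠ 0 := div_ne_zero hx two_ne_zero
  rw [sinc_of_ne_zero hx, sinc_of_ne_zero hx2]
  conv_lhs => rw [← mul_div_cancel₀ x two_ne_zero, sin_two_mul]
  field_simp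

lemma prod_cos_div_two_pow_mul_sinc (x : ℝ) (n : ℕ) :
    (∏ k ∈ Finset.range n, cos (x / 2 ^ (k + 1))) * sinc (x / 2 ^ n) = sinc x := by
  induction n with
  | zero => simp
  | succ n ih =>
    rw [Finset.prod_range_succ, mul_assoc, ← ih, sinc_eq_cos_half_mul_sinc_half (x / 2 ^ n),
      div_div, ← pow_succ]

lemma tendsto_prod_cos_div_two_pow (x : ℝ) :
    Tendsto (fun n ↦ ∏ k ∈ Finset.range n, cos (x / 2 ^ (k + 1))) atTop (𝓝 (sinc x)) := by
  have hsmall : Tendsto (fun n : ℕ ↦ x / 2 ^ n) atTop (𝓝 0) :=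
    tendsto_const_nhds.div_atTop (tendsto_pow_atTop_atTop_of_one_lt one_lt_two)
  have hsinc : Tendsto (fun n : ℕ ↦ sinc (x / 2 ^ n)) atTop (𝓝 1) := by
    simpa only [Function.comp_def, sinc_zero] using (continuous_sinc.tendsto 0).comp hsmall
  have hne : ∀ᶠ n in atTop, sinc (x / 2 ^ n) ≠ 0 := hsinc.eventually_ne one_ne_zero
  have hquot : Tendsto (fun n : ℕ ↦ sinc x / sinc (x / 2 ^ n)) atTop (𝓝 (sinc x / 1)) :=
    tendsto_const_nhds.div hsinc one_ne_zero
  rw [div_one] at hquot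
  refine hquot.congr' (hne.mono fun n hn ↦ ?_)
  rw [← prod_cos_div_two_pow_mul_sinc x n, mul_div_cancel_right₀ _ hn]

lemma sinc_pi_div_two : sinc (π / 2) = 2 / π := by
  rw [sinc_of_ne_zero (by positivity), sin_pi_div_two, one_div_div]

lemma eq_cos_div_two_pow_succ_of_half_angle_rec {a : ℕ → ℝ} {θ : ℝ} (hθ : |θ| ≤ π)
    (h0 : a 0 = √((1 + cos θ) / 2)) (hrec : ∀ n, a (n + 1) = √((1 + a n) / 2)) (n : ℕ) :
    a n = cos (θ / 2 ^ (n + 1)) := by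
  have hsmall (m : ℕ) : -π ≤ θ / 2 ^ m ∧ θ / 2 ^ m ≤ π := by
    rw [← abs_le, abs_div, abs_of_pos (by positivity : (0 : ℝ) < 2 ^ m)]
    exact (div_le_self (abs_nonneg θ) (one_le_pow₀ one_le_two)).trans hθ
  induction n with
  | zero => rw [h0, pow_one, cos_half (abs_le.mp hθ).1 (abs_le.mp hθ).2]
  | succ n ih => rw [hrec, ih, ← cos_half (hsmall _).1 (hsmall _).2, div_div, ← pow_succ]

end Real

theorem viete_formula (a : ℕ → ℝ) (h0 : a 0 = Real.sqrt (1 / 2))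
    (hrec : ∀ n, a (n + 1) = Real.sqrt ((1 + a n) / 2)) :
    Tendsto (fun n : ℕ => ∏ k ∈ Finset.range (n + 1), a k) atTop (𝓝 (2 / Real.pi)) := by
  have h0' : a 0 = √((1 + Real.cos (Real.pi / 2)) / 2) := by
    rw [h0, Real.cos_pi_div_two, add_zero]
  have hθ : |Real.pi / 2| ≤ Real.pi := by
    rw [abs_of_pos (by positivity)]
    linarith [Real.pi_pos]
  have ha := Real.eq_cos_div_two_pow_succ_of_half_angle_rec hθ h0' hrec
  simp_rw [ha, ← Real.sinc_pi_div_two]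
  exact (Real.tendsto_prod_cos_div_two_pow _).comp (tendsto_add_atTop_nat 1)
end

section
/- The Riemann sums of the Gaussian on expanding intervals converge to its integral: the sequence N ↦ ∑_{k=−N²}^{N²} exp(−(k/N)²/2)·(1/N), where k ranges over integers from −N² to N², converges as N → ∞ to ∫_{−∞}^{∞} exp(−x²/2) dx. -/
open Filter Topology MeasureTheory Set Finset

/-! For an even `f` that decreases on `[0, ∞)`, the Riemann sum with step `h` over `[-Mh, Mh]` is
twice the one-sided sum minus `f 0 * h`. Comparing the one-sided sum of a monotone function with its
integral traps the Riemann sum between `∫_{-(M+1)h}^{(M+1)h} f - f 0 * h` and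
`∫_{-Mh}^{Mh} f + f 0 * h`, and both bounds tend to `∫ f` when `h → 0` and `Mh → ∞`. The
Gaussian with `h = 1/N` and `M = N²` is such a case. -/

theorem Function.Even.sum_Icc_neg_eq_two_nsmul_sub {β : Type*} [AddCommGroup β] {g : ℤ → β}
    (hg : g.Even) (M : ℕ) :
    ∑ k ∈ Finset.Icc (-(M : ℤ)) M, g k = 2 • ∑ k ∈ range (M + 1), g k - g 0 := by
  induction M with
  | zero => simp [two_nsmul]
  | succ M ih =>
    have hIcc : Finset.Icc (-((M + 1 : ℕ) : ℤ)) (M + 1 : ℕ)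
        = insert (-(M + 1 : ℤ)) (insert (M + 1 : ℤ) (Finset.Icc (-(M : ℤ)) M)) := by
      ext x; simp only [Finset.mem_Icc, Finset.mem_insert]; omega
    rw [hIcc, sum_insert (by simp only [Finset.mem_insert, Finset.mem_Icc]; omega),
      sum_insert (by simp), ih, sum_range_succ _ (M + 1), hg.eq]
    push_cast
    simp only [smul_add, two_nsmul]
    abel

theorem Function.Even.intervalIntegral_neg_eq_two_mul {f : ℝ → ℝ} (hf : f.Even) {a : ℝ}
    (hint : IntervalIntegrable f volume 0 a) :
    ∫ x in -a..a, f x = 2 * ∫ x in 0..a, f x := by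
  have hneg : IntervalIntegrable f volume (-a) 0 := by
    simpa [hf.eq] using ((IntervalIntegrable.iff_comp_neg (f := f)).mp hint).symm
  have hflip : ∫ x in -a..0, f x = ∫ x in 0..a, f x := by
    simpa [hf.eq] using intervalIntegral.integral_comp_neg (a := -a) (b := 0) f
  rw [← intervalIntegral.integral_add_adjacent_intervals hneg hint, hflip, two_mul]

theorem Function.Even.sum_Icc_mul_eq_two_mul_sub {f : ℝ → ℝ} (hf : f.Even) (h : ℝ)
    (M : ℕ) :
    (∑ k ∈ Finset.Icc (-(M : ℤ)) M, f (k * h)) * h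
      = 2 * ((∑ k ∈ range (M + 1), f (k * h)) * h) - f 0 * h := by
  have hg : Function.Even fun k : ℤ => f (k * h) := fun k => by simp [neg_mul, hf.eq]
  rw [hg.sum_Icc_neg_eq_two_nsmul_sub, two_nsmul, sub_mul, add_mul, two_mul]
  simp

namespace AntitoneOn

variable {f : ℝ → ℝ} {h : ℝ}

theorem comp_mul_right_Icc (hf : AntitoneOn f (Ici 0)) (hh : 0 < h) (M : ℕ) :
    AntitoneOn (fun x => f (x * h)) (Icc 0 (0 + M)) := fun _ hx _ hy hxy =>
  hf (mul_nonneg hx.1 hh.le) (mul_nonneg hy.1 hh.le) (by gcongr)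

theorem integral_le_sum_range_mul (hf : AntitoneOn f (Ici 0)) (hh : 0 < h) (M : ℕ) :
    ∫ x in 0..M * h, f x ≤ (∑ k ∈ range M, f (k * h)) * h := by
  have := (hf.comp_mul_right_Icc hh M).integral_le_sum
  simp only [zero_add, intervalIntegral.integral_comp_mul_right _ hh.ne', zero_mul,
    smul_eq_mul, inv_mul_le_iff₀ hh] at this
  linarith

theorem sum_range_succ_mul_le_integral (hf : AntitoneOn f (Ici 0)) (hh : 0 < h) (M : ℕ) :
    (∑ k ∈ range (M + 1), f (k * h)) * h ≤ (∫ x in 0..M * h, f x) + f 0 * h := by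
  have := (hf.comp_mul_right_Icc hh M).sum_le_integral
  simp only [zero_add, intervalIntegral.integral_comp_mul_right _ hh.ne', zero_mul,
    smul_eq_mul, le_inv_mul_iff₀ hh] at this
  rw [sum_range_succ', Nat.cast_zero, zero_mul, add_mul]
  linarith

theorem intervalIntegrable_zero_left (hf : AntitoneOn f (Ici 0)) {a : ℝ} (ha : 0 ≤ a) :
    IntervalIntegrable f volume 0 a :=
  (hf.mono (by simp [uIcc_of_le ha, Set.Icc_subset_Ici_self])).intervalIntegrable

theorem integral_sub_le_sum_Icc_mul (hf : AntitoneOn f (Ici 0)) (heven : f.Even) (hh : 0 < h)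
    (M : ℕ) : (∫ x in -((M + 1) * h)..(M + 1) * h, f x) - f 0 * h
      ≤ (∑ k ∈ Finset.Icc (-(M : ℤ)) M, f (k * h)) * h := by
  have := hf.integral_le_sum_range_mul hh (M + 1)
  rw [heven.sum_Icc_mul_eq_two_mul_sub, heven.intervalIntegral_neg_eq_two_mul
    (hf.intervalIntegrable_zero_left (by positivity))]
  push_cast at this
  linarith

theorem sum_Icc_mul_le_integral_add (hf : AntitoneOn f (Ici 0)) (heven : f.Even) (hh : 0 < h)
    (M : ℕ) : (∑ k ∈ Finset.Icc (-(M : ℤ)) M, f (k * h)) * h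
      ≤ (∫ x in -(M * h)..M * h, f x) + f 0 * h := by
  have := hf.sum_range_succ_mul_le_integral hh M
  rw [heven.sum_Icc_mul_eq_two_mul_sub, heven.intervalIntegral_neg_eq_two_mul
    (hf.intervalIntegrable_zero_left (by positivity))]
  linarith

theorem tendsto_sum_Icc_mul_integral {ι : Type*} {l : Filter ι} [l.IsCountablyGenerated]
    (hf : AntitoneOn f (Ici 0)) (heven : f.Even) (hint : Integrable f) {h : ι → ℝ}
    {M : ι → ℕ} (hpos : ∀ᶠ i in l, 0 < h i) (hh : Tendsto h l (𝓝 0))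
    (hM : Tendsto (fun i => M i * h i) l atTop) :
    Tendsto (fun i => (∑ k ∈ Finset.Icc (-(M i : ℤ)) (M i), f (k * h i)) * h i) l
      (𝓝 (∫ x, f x)) := by
  have hsym {a : ι → ℝ} (ha : Tendsto a l atTop) :
      Tendsto (fun i => ∫ x in -a i..a i, f x) l (𝓝 (∫ x, f x)) :=
    intervalIntegral_tendsto_integral hint (tendsto_neg_atTop_atBot.comp ha) ha
  have herr : Tendsto (fun i => f 0 * h i) l (𝓝 0) := by simpa using hh.const_mul (f 0)
  have hM' : Tendsto (fun i => (M i + 1) * h i) l atTop :=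
    tendsto_atTop_mono' l (hpos.mono fun i hi => by nlinarith) hM
  refine tendsto_of_tendsto_of_tendsto_of_le_of_le' (by simpa using (hsym hM').sub herr)
    (by simpa using (hsym hM).add herr) ?_ ?_
  · filter_upwards [hpos] with i hi using hf.integral_sub_le_sum_Icc_mul heven hi (M i)
  · filter_upwards [hpos] with i hi using hf.sum_Icc_mul_le_integral_add heven hi (M i)

end AntitoneOn

theorem gaussian_riemann_sum_tendsto_integral :
    Tendsto (fun N : ℕ => ∑ k ∈ Finset.Icc (-(N : ℤ) ^ 2) ((N : ℤ) ^ 2),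
        Real.exp (-((k : ℝ) / (N : ℝ)) ^ 2 / 2) * (1 / (N : ℝ)))
      atTop (𝓝 (∫ x : ℝ, Real.exp (-x ^ 2 / 2))) := by
  set g : ℝ → ℝ := fun x => Real.exp (-x ^ 2 / 2)
  have hanti : AntitoneOn g (Ici 0) := fun x hx y hy hxy => by
    simp only [g, Real.exp_le_exp]
    nlinarith [mem_Ici.mp hx]
  have heven : g.Even := fun x => by simp [g]
  have hint : Integrable g := by
    simpa [g, neg_div, div_eq_inv_mul] using integrable_exp_neg_mul_sq (b := 1 / 2) (by norm_num)
  have hM : Tendsto (fun N : ℕ => ((N ^ 2 : ℕ) : ℝ) * (1 / N)) atTop atTop := by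
    refine tendsto_natCast_atTop_atTop.congr' ?_
    filter_upwards [eventually_ne_atTop 0] with N hN
    push_cast
    field_simp
  have := hanti.tendsto_sum_Icc_mul_integral heven hint
    (eventually_gt_atTop 0 |>.mono fun N hN => by positivity) tendsto_one_div_atTop_nhds_zero_nat hM
  simpa [g, Finset.sum_mul, div_eq_mul_inv] using this
end

section
/- Let f : ℝ → ℝ be continuous, nonnegative, Lebesgue integrable on ℝ, antitone on [0, ∞) and monotone on (−∞, 0]. Then the Riemann sums on expanding intervals converge to the integral: the sequence N ↦ ∑_{k=−N²}^{N²} f(k/N)·(1/N), where k ranges over integers from −N² to N², converges as N → ∞ to ∫_{−∞}^{∞} f(x) dx. -/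
/-!
On `[0, ∞)` an antitone `g` satisfies `g ((k + 1) δ) δ ≤ ∫_{kδ}^{(k+1)δ} g ≤ g (k δ) δ`, so the
one-sided Riemann sum `∑_{k ≤ n} g (k δ) δ` lies between `∫_0^{(n+1)δ} g` and
`g 0 δ + ∫_0^{nδ} g`. As `δ → 0` and `nδ → ∞` both bounds tend to `∫_0^∞ g`. The symmetric sum
over `-N² ≤ k ≤ N²` is the sum of the one-sided sums for `f` and `x ↦ f (-x)` with mesh `1/N`,
minus the doubly counted term `f 0 / N`.
-/

open Filter Topology MeasureTheory Set Finset

namespace AntitoneOn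
variable {g : ℝ → ℝ} {δ : ℝ} {n : ℕ}

lemma comp_mul_right {b : ℝ} (hg : AntitoneOn g (Icc 0 (b * δ))) (hδ : 0 ≤ δ) :
    AntitoneOn (fun x => g (x * δ)) (Icc 0 b) := fun _ hx _ hy hxy =>
  hg ⟨mul_nonneg hx.1 hδ, mul_le_mul_of_nonneg_right hx.2 hδ⟩
    ⟨mul_nonneg hy.1 hδ, mul_le_mul_of_nonneg_right hy.2 hδ⟩ (mul_le_mul_of_nonneg_right hxy hδ)

lemma integral_le_sum_mul (hg : AntitoneOn g (Icc 0 (n * δ))) (hδ : 0 < δ) :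
    ∫ x in 0..n * δ, g x ≤ ∑ k ∈ range n, g (k * δ) * δ := by
  have h := AntitoneOn.integral_le_sum (x₀ := 0) (by simpa using hg.comp_mul_right hδ.le)
  rw [intervalIntegral.integral_comp_mul_right _ hδ.ne', smul_eq_mul,
    inv_mul_le_iff₀ hδ] at h
  simpa [sum_mul, mul_comm δ] using h

lemma sum_mul_le_integral (hg : AntitoneOn g (Icc 0 (n * δ))) (hδ : 0 < δ) :
    ∑ k ∈ range n, g ((k + 1) * δ) * δ ≤ ∫ x in 0..n * δ, g x := by
  have h := AntitoneOn.sum_le_integral (x₀ := 0) (by simpa using hg.comp_mul_right hδ.le)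
  rw [intervalIntegral.integral_comp_mul_right _ hδ.ne', smul_eq_mul,
    le_inv_mul_iff₀ hδ] at h
  simpa [sum_mul, mul_comm δ] using h

theorem tendsto_sum_range_succ_mul {ι : Type*} {l : Filter ι} [l.IsCountablyGenerated]
    {δ : ι → ℝ} {n : ι → ℕ}
    (hg : AntitoneOn g (Ici 0)) (hint : IntegrableOn g (Ioi 0)) (hδpos : ∀ᶠ i in l, 0 < δ i)
    (hδ : Tendsto δ l (𝓝 0)) (hn : Tendsto (fun i => n i * δ i) l atTop) :
    Tendsto (fun i => ∑ k ∈ range (n i + 1), g (k * δ i) * δ i) l (𝓝 (∫ x in Ioi 0, g x)) := by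
  have hn' : Tendsto (fun i => ((n i + 1 : ℕ) : ℝ) * δ i) l atTop := by
    refine tendsto_atTop_mono' l ?_ hn
    filter_upwards [hδpos] with i hi
    gcongr
    exact_mod_cast (n i).le_succ
  have hupper := (hδ.const_mul (g 0)).add (intervalIntegral_tendsto_integral_Ioi 0 hint hn)
  rw [mul_zero, zero_add] at hupper
  refine tendsto_of_tendsto_of_tendsto_of_le_of_le'
    (intervalIntegral_tendsto_integral_Ioi 0 hint hn') hupper ?_ ?_
  · filter_upwards [hδpos] with i hi
    exact (hg.mono Icc_subset_Ici_self).integral_le_sum_mul hi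
  · filter_upwards [hδpos] with i hi
    rw [sum_range_succ', Nat.cast_zero, zero_mul, add_comm]
    push_cast
    gcongr
    exact (hg.mono Icc_subset_Ici_self).sum_mul_le_integral hi

end AntitoneOn

lemma MonotoneOn.comp_neg {α β : Type*} [AddCommGroup α] [PartialOrder α] [IsOrderedAddMonoid α]
    [Preorder β] {f : α → β} {s : Set α} (hf : MonotoneOn f s) :
    AntitoneOn (fun x => f (-x)) (-s) :=
  fun _ hx _ hy hxy => hf hy hx (neg_le_neg hxy)

lemma Finset.sum_Icc_neg_add_apply_zero {M : Type*} [AddCommMonoid M] (φ : ℤ → M) (N : ℕ) :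
    ∑ m ∈ Icc (-N : ℤ) N, φ m + φ 0 = ∑ m ∈ range (N + 1), (φ m + φ (-m)) := by
  induction N with
  | zero => simp
  | succ N ih =>
    rw [Nat.cast_add, Nat.cast_one, Icc_succ_succ, sum_union (by simp), sum_pair (by lia),
      sum_range_succ, ← ih]
    push_cast
    abel

theorem riemann_sum_tendsto_integral_general (f : ℝ → ℝ)
    (hint : MeasureTheory.Integrable f) (hanti : AntitoneOn f (Set.Ici 0))
    (hmono : MonotoneOn f (Set.Iic 0)) :
    Tendsto (fun N : ℕ => ∑ k ∈ Finset.Icc (-(N : ℤ) ^ 2) ((N : ℤ) ^ 2),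
        f ((k : ℝ) / (N : ℝ)) * (1 / (N : ℝ)))
      atTop (𝓝 (∫ x : ℝ, f x)) := by
  have hδpos : ∀ᶠ N : ℕ in atTop, 0 < 1 / (N : ℝ) := by
    filter_upwards [eventually_gt_atTop 0] with N hN
    positivity
  have hδ : Tendsto (fun N : ℕ => 1 / (N : ℝ)) atTop (𝓝 0) := tendsto_one_div_atTop_nhds_zero_nat
  have hn : Tendsto (fun N : ℕ => ((N ^ 2 : ℕ) : ℝ) * (1 / N)) atTop atTop := by
    refine tendsto_natCast_atTop_atTop.congr fun N => ?_
    push_cast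
    rcases eq_or_ne (N : ℝ) 0 with hN | hN
    · simp [hN]
    · field_simp
  have hright := hanti.tendsto_sum_range_succ_mul hint.integrableOn hδpos hδ hn
  have hleft := (by simpa using hmono.comp_neg : AntitoneOn (fun x => f (-x)) (Ici 0))
    |>.tendsto_sum_range_succ_mul hint.comp_neg.integrableOn hδpos hδ hn
  rw [integral_comp_neg_Ioi, neg_zero] at hleft
  have hsum := (hright.add hleft).sub (hδ.const_mul (f 0))
  rw [add_comm, intervalIntegral.integral_Iic_add_Ioi hint.integrableOn hint.integrableOn,
    mul_zero, sub_zero] at hsum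
  refine hsum.congr fun N => ?_
  have hsplit := sum_Icc_neg_add_apply_zero (fun k : ℤ => f (k / N) * (1 / N)) (N ^ 2)
  push_cast at hsplit
  simp only [mul_one_div, neg_div, zero_div] at hsplit ⊢
  rw [← sum_add_distrib, ← hsplit, add_sub_cancel_right]

theorem riemann_sum_tendsto_integral (f : ℝ → ℝ) (hc : Continuous f) (hnn : ∀ x, 0 ≤ f x)
    (hint : MeasureTheory.Integrable f) (hanti : AntitoneOn f (Set.Ici 0))
    (hmono : MonotoneOn f (Set.Iic 0)) :
    Tendsto (fun N : ℕ => ∑ k ∈ Finset.Icc (-(N : ℤ) ^ 2) ((N : ℤ) ^ 2),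
        f ((k : ℝ) / (N : ℝ)) * (1 / (N : ℝ)))
      atTop (𝓝 (∫ x : ℝ, f x)) :=
  riemann_sum_tendsto_integral_general f hint hanti hmono
end

section
/- The circle is topologically finite: every continuous injective map from the unit circle to itself is surjective. Precisely, if f is a continuous injection from the unit circle {z ∈ ℂ : |z| = 1} to itself, then f is surjective. In particular, the circle is not homeomorphic to any proper subset of itself. -/
/-!
If `f` misses a point `p`, stereographic projection from `p` turns `f` into a continuous injection
of the circle into `ℝ`. Removing a point does not disconnect the circle, so by the intermediate
value theorem no value of such a map lies between two others; but of three distinct reals one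
always does.
-/

open Function Metric Module Set

section LinearOrder

variable {X α : Type*} [TopologicalSpace X] [LinearOrder α] [TopologicalSpace α]
  [OrderClosedTopology α]

lemma Continuous.apply_notMem_uIcc_of_injective {g : X → α} (hg : Continuous g)
    (hinj : Injective g) (hX : ∀ x : X, IsPreconnected ({x}ᶜ : Set X)) {a b x : X}
    (hax : a ≠ x) (hbx : b ≠ x) : g x ∉ uIcc (g a) (g b) := by
  intro hmem
  have hsub : uIcc (g a) (g b) ⊆ g '' {x}ᶜ :=
    (IsPreconnected.image (hX x) g hg.continuousOn).ordConnected.uIcc_subset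
      (mem_image_of_mem g hax) (mem_image_of_mem g hbx)
  obtain ⟨y, hyx, hy⟩ := hsub hmem
  exact hyx (hinj hy)

omit [TopologicalSpace α] [OrderClosedTopology α] in
lemma mem_uIcc_or_mem_uIcc_or_mem_uIcc (u v w : α) :
    u ∈ uIcc v w ∨ v ∈ uIcc u w ∨ w ∈ uIcc u v := by
  simp only [mem_uIcc]
  rcases le_total u v with huv | hvu <;> rcases le_total v w with hvw | hwv <;>
    rcases le_total u w with huw | hwu <;> tauto

lemma Continuous.not_injective_of_isPreconnected_compl_singleton {g : X → α}
    (hg : Continuous g) (hX : ∀ x : X, IsPreconnected ({x}ᶜ : Set X)) {a b c : X}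
    (hab : a ≠ b) (hbc : b ≠ c) (hac : a ≠ c) : ¬ Injective g := by
  intro hinj
  rcases mem_uIcc_or_mem_uIcc_or_mem_uIcc (g a) (g b) (g c) with h | h | h
  · exact hg.apply_notMem_uIcc_of_injective hinj hX hab.symm hac.symm h
  · exact hg.apply_notMem_uIcc_of_injective hinj hX hab hbc.symm h
  · exact hg.apply_notMem_uIcc_of_injective hinj hX hac hbc h

end LinearOrder

lemma isPreconnected_sphere_compl_singleton {E : Type*} [NormedAddCommGroup E]
    [InnerProductSpace ℝ E] {n : ℕ} [Fact (finrank ℝ E = n + 1)] (v : sphere (0 : E) 1) :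
    IsPreconnected ({v}ᶜ : Set (sphere (0 : E) 1)) := by
  have h := (stereographic'_target (n := n) v ▸ isPreconnected_univ).image _
    (stereographic' n v).continuousOn_symm
  rwa [(stereographic' n v).symm_image_target_eq_source, stereographic'_source] at h

theorem circle_topologically_finite
    (f : Metric.sphere (0 : ℂ) 1 → Metric.sphere (0 : ℂ) 1)
    (hf : Continuous f) (hinj : Function.Injective f) : Function.Surjective f := by
  have : Fact (finrank ℝ ℂ = 1 + 1) := ⟨Complex.finrank_real_complex⟩
  by_contra hns
  obtain ⟨p, hp⟩ := not_forall.mp hns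
  set e := stereographic' 1 p
  have hmaps : ∀ x, f x ∈ e.source := fun x => by
    rw [stereographic'_source]
    exact fun hx => hp ⟨x, hx⟩
  let coord := PiLp.equivOfUnique 2 ℝ (fun _ : Fin 1 => ℝ)
  have hg : Continuous fun x => coord (e (f x)) :=
    coord.continuous.comp (e.continuousOn.comp_continuous hf hmaps)
  have hginj : Injective fun x => coord (e (f x)) :=
    coord.injective.comp fun x y h => hinj (e.injOn (hmaps x) (hmaps y) h)
  refine hg.not_injective_of_isPreconnected_compl_singleton
    (isPreconnected_sphere_compl_singleton (n := 1))
    (a := ⟨1, by simp⟩) (b := ⟨-1, by simp⟩) (c := ⟨Complex.I, by simp⟩) ?_ ?_ ?_ hginj <;>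
    norm_num [Subtype.ext_iff, Complex.ext_iff]
end

section
/- The 2-sphere is topologically finite: every continuous injective map from the unit sphere in ℝ³ to itself is surjective. Precisely, if f is a continuous injection from {x ∈ ℝ³ : ‖x‖ = 1} to itself, then f is surjective. In particular, the sphere is not homeomorphic to any proper subset of itself. -/
/-!
A continuous injection `S² → S²` missing a point `p`, followed by stereographic projection from
`p`, would be a continuous injection `g : S² → ℂ`. Then `x ↦ g x - g (-x)` is an odd map without
zeros, contradicting the two-dimensional Borsuk–Ulam theorem. The latter is proved by lifting
along `exp`: an odd nonvanishing map on the upper hemisphere (a disc) has a continuous logarithm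
`L`, and `L (-z) - L z` is then a logarithm of `-1` on the equator which is both constant and odd.
-/

open Complex Metric

theorem SimplyConnectedSpace.exists_continuous_exp_eq {X : Type*} [TopologicalSpace X]
    [SimplyConnectedSpace X] [LocallyPathConnectedSpace X] {g : X → ℂ} (hg : Continuous g)
    (hg0 : ∀ x, g x ≠ 0) : ∃ L : X → ℂ, Continuous L ∧ ∀ x, exp (L x) = g x := by
  obtain ⟨x₀⟩ : Nonempty X := inferInstance
  obtain ⟨L, ⟨-, hL⟩, -⟩ := isCoveringMapOn_exp.existsUnique_continuousMap_lifts ⟨g, hg⟩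
    (exp_log (hg0 x₀)) hg0
  exact ⟨L, L.continuous, congr_fun hL⟩

theorem exists_eq_zero_of_odd_on_boundary_unitDisc {g : closedBall (0 : ℂ) 1 → ℂ}
    (hg : Continuous g)
    (hodd : ∀ z w : closedBall (0 : ℂ) 1, ‖(z : ℂ)‖ = 1 → (w : ℂ) = -z → g w = -g z) :
    ∃ z, g z = 0 := by
  by_contra! hg0
  have : SimplyConnectedSpace (closedBall (0 : ℂ) 1) :=
    have := contractibleSpace_closedBall (x := (0 : ℂ)) zero_le_one
    inferInstance
  have := (convex_closedBall (0 : ℂ) 1).locallyPathConnectedSpace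
  obtain ⟨L, hLc, hL⟩ := SimplyConnectedSpace.exists_continuous_exp_eq hg hg0
  let ι : sphere (0 : ℂ) 1 → closedBall (0 : ℂ) 1 := Set.inclusion sphere_subset_closedBall
  let D : sphere (0 : ℂ) 1 → ℂ := fun z ↦ L (ι (-z)) - L (ι z)
  have hD : ∀ z, exp (D z) = -1 := by
    intro z
    rw [exp_sub, hL, hL, hodd (ι z) (ι (-z)) (mem_sphere_zero_iff_norm.mp z.2) rfl, neg_div,
      div_self (hg0 _)]
  have : PreconnectedSpace (sphere (0 : ℂ) 1) :=
    Subtype.preconnectedSpace (isPreconnected_sphere (by simp) 0 1)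
  have hDc : Continuous D := by
    have hι : Continuous ι := continuous_inclusion _
    exact (hLc.comp (hι.comp continuous_neg)).sub (hLc.comp hι)
  -- `exp ∘ D` is constant and `exp` is a covering map, so `D` is constant on the connected circle
  have hD1 : D 1 = D (-1) :=
    isCoveringMap_exp.const_of_comp hDc (fun a b ↦ Subtype.ext (by simp only [hD])) 1 (-1)
  have hD0 : D 1 = 0 := by
    have : D (-1) = -D 1 := by simp [D]
    linear_combination (hD1.trans this) / 2
  have h := hD 1
  rw [hD0, exp_zero] at h
  norm_num at h

noncomputable def upperHemisphere (z : closedBall (0 : ℂ) 1) :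
    sphere (0 : EuclideanSpace ℝ (Fin 3)) 1 :=
  ⟨!₂[(z : ℂ).re, (z : ℂ).im, √(1 - ‖(z : ℂ)‖ ^ 2)], by
    have hz : ‖(z : ℂ)‖ ≤ 1 := mem_closedBall_zero_iff.mp z.2
    have h1 : 0 ≤ 1 - ‖(z : ℂ)‖ ^ 2 := by nlinarith [norm_nonneg (z : ℂ)]
    rw [mem_sphere_zero_iff_norm, EuclideanSpace.norm_eq, Real.sqrt_eq_one, Fin.sum_univ_three]
    simp only [Fin.isValue, Matrix.cons_val_zero, Real.norm_eq_abs, sq_abs, Matrix.cons_val_one,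
      Matrix.cons_val, Real.sq_sqrt h1]
    rw [Complex.sq_norm, Complex.normSq_apply]
    ring⟩

theorem continuous_upperHemisphere : Continuous upperHemisphere := by
  unfold upperHemisphere
  fun_prop

theorem upperHemisphere_neg {z w : closedBall (0 : ℂ) 1} (hz : ‖(z : ℂ)‖ = 1)
    (hw : (w : ℂ) = -z) : upperHemisphere w = -upperHemisphere z := by
  ext i
  fin_cases i <;> simp [upperHemisphere, hw, hz]

theorem exists_eq_zero_of_odd_sphere_two {H : sphere (0 : EuclideanSpace ℝ (Fin 3)) 1 → ℂ}
    (hH : Continuous H) (hodd : ∀ x, H (-x) = -H x) : ∃ x, H x = 0 := by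
  obtain ⟨z, hz⟩ :=
    exists_eq_zero_of_odd_on_boundary_unitDisc (hH.comp continuous_upperHemisphere)
      fun z w hz hw ↦ by simp only [Function.comp_apply, upperHemisphere_neg hz hw, hodd]
  exact ⟨_, hz⟩

theorem not_injective_sphere_two_to_complex {g : sphere (0 : EuclideanSpace ℝ (Fin 3)) 1 → ℂ}
    (hg : Continuous g) : ¬ Function.Injective g := by
  intro hinj
  obtain ⟨x, hx⟩ := exists_eq_zero_of_odd_sphere_two (H := fun x ↦ g x - g (-x))
    (hg.sub (hg.comp continuous_neg)) fun x ↦ by simp only [neg_neg, neg_sub]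
  exact ne_neg_of_mem_unit_sphere ℝ x (hinj (sub_eq_zero.mp hx))

theorem sphere_topologically_finite
    (f : Metric.sphere (0 : EuclideanSpace ℝ (Fin 3)) 1 →
      Metric.sphere (0 : EuclideanSpace ℝ (Fin 3)) 1)
    (hf : Continuous f) (hinj : Function.Injective f) : Function.Surjective f := by
  intro p
  by_contra! hp
  have : Fact (Module.finrank ℝ (EuclideanSpace ℝ (Fin 3)) = 2 + 1) := ⟨by simp⟩
  let e := stereographic' 2 p
  have hsource : ∀ x, f x ∈ e.source := fun x ↦ by
    rw [stereographic'_source]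
    exact hp x
  let toComplex := orthonormalBasisOneI.repr.symm
  apply not_injective_sphere_two_to_complex
    (toComplex.continuous.comp (e.continuousOn.comp_continuous hf hsource))
  exact toComplex.injective.comp fun x y hxy ↦ hinj (e.injOn (hsource x) (hsource y) hxy)
end
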